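/- arXiv:2009.09297 — 5 statements merged into one kernel-verified Lean document; each statement's English description precedes it below -/
import Mathlib

section
/- Let G be a Frattini-injective pro-p group (distinct finitely generated closed subgroups of G have distinct Frattini subgroups), and let H be a finitely generated closed subgroup of G. Then the normalizer of H in G equals the normalizer of the Frattini subgroup Φ(H) in G. In particular, H is normal in G if and only if Φ(H) is normal in G. -/
/-- A pro-`p` group: a compact Hausdorff totally disconnected topological group in which
every open normal subgroup has index a power of `p`. -/
def IsProPGroup (p : ℕ) (G : Type*) [Group G] [TopologicalSpace G] [IsTopologicalGroup G] : Prop :=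
  CompactSpace G ∧ T2Space G ∧ TotallyDisconnectedSpace G ∧
    ∀ U : Subgroup G, U.Normal → IsOpen (U : Set G) → ∃ n : ℕ, U.index = p ^ n

/-- The Frattini subgroup of a subgroup `H` of `G`, viewed as a subgroup of `G`:
the intersection of all maximal open subgroups of `H` (taken inside `H`), mapped into `G`. -/
def frattiniOf {G : Type*} [Group G] [TopologicalSpace G] (H : Subgroup G) : Subgroup G :=
  (⨅ M ∈ {M : Subgroup ↥H | IsOpen (M : Set ↥H) ∧ IsCoatom M}, M).map H.subtype

/-- `H` is topologically finitely generated. -/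
def TopFG {G : Type*} [Group G] [TopologicalSpace G] [IsTopologicalGroup G] (H : Subgroup G) : Prop :=
  ∃ S : Finset G, (Subgroup.closure (S : Set G)).topologicalClosure = H

/-- The minimal number of topological generators of `H`. -/
noncomputable def genNum {G : Type*} [Group G] [TopologicalSpace G] [IsTopologicalGroup G]
    (H : Subgroup G) : ℕ :=
  sInf {n | ∃ S : Finset G, S.card = n ∧ (Subgroup.closure (S : Set G)).topologicalClosure = H}

/-- `G` is Frattini-injective: distinct finitely generated closed subgroups have
distinct Frattini subgroups. -/
def FrattiniInjective (G : Type*) [Group G] [TopologicalSpace G] [IsTopologicalGroup G] : Prop :=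
  ∀ H K : Subgroup G, IsClosed (H : Set G) → IsClosed (K : Set G) → TopFG H → TopFG K →
    frattiniOf H = frattiniOf K → H = K

/-- `(G, K, H)` is a hierarchical triple: `x ^ p ∈ H` implies `x ∈ K`. -/
def Hierarchical (p : ℕ) {G : Type*} [Group G] (K H : Subgroup G) : Prop :=
  ∀ x : G, x ^ p ∈ H → x ∈ K

/-- `G` is Frattini-resistant: `(G, H, Φ(H))` is hierarchical for every finitely generated
closed subgroup `H`. -/
def FrattiniResistant (p : ℕ) (G : Type*) [Group G] [TopologicalSpace G] [IsTopologicalGroup G] :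
    Prop :=
  ∀ H : Subgroup G, IsClosed (H : Set G) → TopFG H → Hierarchical p H (frattiniOf H)

/-- The closed commutator subgroup of `H`, as a subgroup of the ambient group. -/
def commClosure {G : Type*} [Group G] [TopologicalSpace G] [IsTopologicalGroup G]
    (H : Subgroup G) : Subgroup G :=
  (⁅H, H⁆ : Subgroup G).topologicalClosure

/-! A continuous isomorphism carries open maximal subgroups to open maximal subgroups, so it
commutes with taking Frattini subgroups; in particular `Φ(gHg⁻¹) = gΦ(H)g⁻¹`. Hence `g`
normalizing `H` normalizes `Φ(H)`, and conversely if `g` normalizes `Φ(H)` then `gHg⁻¹` and `H`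
are finitely generated closed subgroups with the same Frattini subgroup, so they coincide by
Frattini-injectivity. -/

namespace ContinuousMulEquiv

variable {G G' : Type*} [Group G] [Group G'] [TopologicalSpace G] [TopologicalSpace G']

def conj [IsTopologicalGroup G] (g : G) : G ≃ₜ* G where
  toMulEquiv := MulAut.conj g
  continuous_toFun := show Continuous fun x ↦ g * x * g⁻¹ by fun_prop
  continuous_invFun := show Continuous fun x ↦ g⁻¹ * x * g by fun_prop

def subgroupMap (e : G ≃ₜ* G') (H : Subgroup G) : H ≃ₜ* H.map (e : G →* G') where
  toMulEquiv := (e : G ≃* G').subgroupMap H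
  continuous_toFun := (e.continuous.comp continuous_subtype_val).subtype_mk _
  continuous_invFun := (e.symm.continuous.comp continuous_subtype_val).subtype_mk _

theorem isOpen_map_subgroup_iff (e : G ≃ₜ* G') (M : Subgroup G) :
    IsOpen (M.map (e : G →* G') : Set G') ↔ IsOpen (M : Set G) :=
  (e : G ≃ₜ G').isOpen_image

theorem map_iInf_isOpen_isCoatom (e : G ≃ₜ* G') :
    (⨅ M ∈ {M : Subgroup G | IsOpen (M : Set G) ∧ IsCoatom M}, M).map (e : G →* G') =
      ⨅ N ∈ {N : Subgroup G' | IsOpen (N : Set G') ∧ IsCoatom N}, N := by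
  set φ := (e : G ≃* G').mapSubgroup
  have hset : {N : Subgroup G' | IsOpen (N : Set G') ∧ IsCoatom N} =
      φ '' {M : Subgroup G | IsOpen (M : Set G) ∧ IsCoatom M} := by
    ext N
    obtain ⟨M, rfl⟩ := φ.surjective N
    simp only [Set.mem_ofPred_eq, φ.injective.mem_set_image, φ.isCoatom_iff]
    exact and_congr_left' (e.isOpen_map_subgroup_iff M)
  rw [← sInf_eq_iInf, ← sInf_eq_iInf, hset, sInf_image, ← φ.map_sInf]
  rfl

end ContinuousMulEquiv

section

variable {G G' : Type*} [Group G] [Group G'] [TopologicalSpace G] [TopologicalSpace G']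

theorem frattiniOf_map (e : G ≃ₜ* G') (H : Subgroup G) :
    frattiniOf (H.map (e : G →* G')) = (frattiniOf H).map (e : G →* G') := by
  rw [frattiniOf, frattiniOf, ← (e.subgroupMap H).map_iInf_isOpen_isCoatom, Subgroup.map_map,
    Subgroup.map_map]
  rfl

variable [IsTopologicalGroup G] [IsTopologicalGroup G']

theorem TopFG.map (e : G ≃ₜ* G') {H : Subgroup G} (hH : TopFG H) :
    TopFG (H.map (e : G →* G')) := by
  classical
  obtain ⟨S, rfl⟩ := hH
  refine ⟨S.image e, ?_⟩
  apply SetLike.coe_injective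
  rw [Subgroup.coe_map, Subgroup.topologicalClosure_coe, Subgroup.topologicalClosure_coe]
  refine (((e : G ≃ₜ G').image_closure _).trans ?_).symm
  congr 1
  rw [Finset.coe_image]
  exact congrArg SetLike.coe (MonoidHom.map_closure (e : G →* G') _)

theorem FrattiniInjective.map_eq_iff (hFI : FrattiniInjective G) (e : G ≃ₜ* G) {H : Subgroup G}
    (hHc : IsClosed (H : Set G)) (hHfg : TopFG H) :
    H.map (e : G →* G) = H ↔ (frattiniOf H).map (e : G →* G) = frattiniOf H := by
  rw [← frattiniOf_map]
  refine ⟨fun h ↦ by rw [h], fun h ↦ hFI _ _ ?_ hHc (hHfg.map e) hHfg h⟩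
  rw [Subgroup.coe_map]
  exact (e : G ≃ₜ G).isClosedMap _ hHc

end

theorem stmt_0_general (G : Type*) [Group G] [TopologicalSpace G]
    [IsTopologicalGroup G] (hFI : FrattiniInjective G)
    (H : Subgroup G) (hHc : IsClosed (H : Set G)) (hHfg : TopFG H) :
    Subgroup.normalizer (H : Set G) = Subgroup.normalizer (frattiniOf H : Set G) ∧ (H.Normal ↔ (frattiniOf H).Normal) := by
  have hnormalizer : Subgroup.normalizer (H : Set G) = Subgroup.normalizer (frattiniOf H : Set G) := by
    ext g
    simp only [Subgroup.mem_normalizer_iff_map_conj_eq]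
    exact hFI.map_eq_iff (.conj g) hHc hHfg
  exact ⟨hnormalizer, by rw [← Subgroup.normalizer_eq_top_iff, ← Subgroup.normalizer_eq_top_iff, hnormalizer]⟩

/-- In a Frattini-injective pro-`p` group, the normalizer of a finitely
generated closed subgroup `H` equals the normalizer of its Frattini subgroup; in particular
`H` is normal iff `Φ(H)` is normal. -/
theorem stmt_0 {p : ℕ} (hp : p.Prime) (G : Type*) [Group G] [TopologicalSpace G]
    [IsTopologicalGroup G] (hG : IsProPGroup p G) (hFI : FrattiniInjective G)
    (H : Subgroup G) (hHc : IsClosed (H : Set G)) (hHfg : TopFG H) :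
    Subgroup.normalizer (H : Set G) = Subgroup.normalizer (frattiniOf H : Set G) ∧ (H.Normal ↔ (frattiniOf H).Normal) :=
  stmt_0_general G hFI H hHc hHfg
end

section
/- Every maximal abelian closed subgroup of a Frattini-injective pro-p group is isolated, i.e., if A is a maximal abelian closed subgroup of G and x ∈ G satisfies x^p ∈ A, then x ∈ A. -/
/-!
In a pro-`p` group the open maximal subgroups of the procyclic group `⟨y⟩̄` are exactly its open
subgroups that contain `y ^ p` but not `y`: its finite quotients are cyclic `p`-groups, and a
closed subgroup is the intersection of the open subgroups containing it. Hence
`Φ(⟨y⟩̄) = ⟨y ^ p⟩̄`, and Frattini-injectivity makes `x ↦ x ^ p` injective: `u ^ p = v ^ p`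
forces `⟨u⟩̄ = ⟨v⟩̄`, so `u` and `v` commute and `(u * v⁻¹) ^ p = 1 ^ p`.
Now if `x ^ p ∈ A` then `(a * x * a⁻¹) ^ p = x ^ p` for every `a ∈ A`, so `x` centralizes `A`,
`⟨A, x⟩` is abelian, and maximality of `A` gives `x ∈ A`.
-/

open Subgroup

namespace Subgroup

section Algebra

variable {K : Type*} [Group K]

theorem mem_of_zpow_mem_of_isCoprime (U : Subgroup K) {g : K} {a b : ℤ} (hab : IsCoprime a b)
    (ha : g ^ a ∈ U) (hb : g ^ b ∈ U) : g ∈ U := by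
  obtain ⟨u, v, huv⟩ := hab
  have hg : g = (g ^ a) ^ u * (g ^ b) ^ v := by
    rw [← zpow_mul, ← zpow_mul, ← zpow_add, mul_comm a, mul_comm b, huv, zpow_one]
  rw [hg]
  exact mul_mem (zpow_mem ha u) (zpow_mem hb v)

variable {p : ℕ} {g : K}

theorem isCoatom_of_sup_zpowers_eq_top (hp : p.Prime) {U : Subgroup K} [U.Normal]
    (hU : U ⊔ zpowers g = ⊤) (hgp : g ^ p ∈ U) (hg : g ∉ U) : IsCoatom U := by
  refine ⟨fun h => hg (h ▸ mem_top g), fun N hUN => ?_⟩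
  obtain ⟨n, hnN, hnU⟩ := SetLike.exists_of_lt hUN
  obtain ⟨u, hu, _, ⟨k, rfl⟩, rfl⟩ := mem_sup_of_normal_left.mp (hU ▸ mem_top n)
  have hk : ¬ (p : ℤ) ∣ k := by
    rintro ⟨j, rfl⟩
    refine hnU (mul_mem hu ?_)
    simpa only [zpow_mul, zpow_natCast] using zpow_mem hgp j
  have hgk : g ^ k ∈ N := by simpa using mul_mem (inv_mem (hUN.le hu)) hnN
  have hgN : g ∈ N := N.mem_of_zpow_mem_of_isCoprime
    ((Nat.prime_iff_prime_int.mp hp).coprime_iff_not_dvd.mpr hk)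
    (by simpa only [zpow_natCast] using hUN.le hgp) hgk
  rw [eq_top_iff, ← hU]
  exact sup_le hUN.le (zpowers_le.mpr hgN)

theorem pow_mem_of_isCoatom {M : Subgroup K} [M.Normal] (hM : IsCoatom M) {k : ℕ}
    (hk : g ^ p ^ k ∈ M) : g ^ p ∈ M := by
  by_contra hgp
  have hsup : M ⊔ zpowers (g ^ p) = ⊤ := hM.2 _ (left_lt_sup.mpr (by rwa [zpowers_le]))
  obtain ⟨m, hm, _, ⟨j, rfl⟩, hmj⟩ := mem_sup_of_normal_left.mp (hsup ▸ mem_top g)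
  have hm' : g ^ (1 - (p : ℤ) * j) ∈ M := by
    rwa [zpow_sub, zpow_one, zpow_mul, zpow_natCast, ← eq_mul_inv_of_mul_eq hmj]
  have hcop : IsCoprime (1 - (p : ℤ) * j) ((p : ℤ) ^ k) := IsCoprime.pow_right ⟨1, j, by ring⟩
  exact hgp (pow_mem (M.mem_of_zpow_mem_of_isCoprime hcop hm' (by exact_mod_cast hk)) p)

end Algebra

section Topology

variable {G : Type*} [Group G] [TopologicalSpace G] [IsTopologicalGroup G]

instance isMulCommutative_topologicalClosure [T2Space G] (s : Subgroup G) [IsMulCommutative s] :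
    IsMulCommutative s.topologicalClosure := by
  have h : s.topologicalClosure ≤ centralizer s :=
    topologicalClosure_minimal _ (le_centralizer s) (Set.isClosed_centralizer _)
  exact le_centralizer_iff_isMulCommutative.mp <|
    topologicalClosure_minimal _ (le_centralizer_iff.mp h) (Set.isClosed_centralizer _)

theorem eq_top_of_isOpen_of_le_map {s : Subgroup G} {U : Subgroup s.topologicalClosure}
    (hU : IsOpen (U : Set s.topologicalClosure)) (hsU : s ≤ U.map s.topologicalClosure.subtype) :
    U = ⊤ := by
  have hUc : IsClosed ((U.map s.topologicalClosure.subtype : Subgroup G) : Set G) := by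
    rw [coe_map, coe_subtype]
    exact s.isClosed_topologicalClosure.isClosedMap_subtype_val _ (U.isClosed_of_isOpen hU)
  refine (eq_top_iff' U).mpr fun h => ?_
  exact (mem_map_iff_mem s.topologicalClosure.subtype_injective).mp
    (topologicalClosure_minimal _ hsU hUc h.2)

theorem exists_isOpen_le_of_notMem [CompactSpace G] [TotallyDisconnectedSpace G] {C : Subgroup G}
    (hC : IsClosed (C : Set G)) {g : G} (hg : g ∉ C) :
    ∃ U : Subgroup G, IsOpen (U : Set G) ∧ C ≤ U ∧ g ∉ U := by
  rw [show C = _ from ProfiniteGrp.closedSubgroup_eq_sInf_open ⟨C, hC⟩, mem_sInf] at hg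
  push Not at hg
  obtain ⟨U, ⟨hUo, hCU⟩, hgU⟩ := hg
  exact ⟨U, hUo, hCU, hgU⟩

end Topology

end Subgroup

section Frattini

variable {G : Type*} [Group G] [TopologicalSpace G]

theorem frattiniOf_le (H : Subgroup G) : frattiniOf H ≤ H :=
  map_subtype_le _

theorem coe_mem_frattiniOf_iff {H : Subgroup G} {h : H} :
    (h : G) ∈ frattiniOf H ↔ ∀ M : Subgroup H, IsOpen (M : Set H) → IsCoatom M → h ∈ M := by
  simp [frattiniOf, mem_iInf]

theorem isClosed_frattiniOf [IsTopologicalGroup G] {H : Subgroup G} (hH : IsClosed (H : Set G)) :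
    IsClosed (frattiniOf H : Set G) := by
  rw [frattiniOf, coe_map, coe_subtype]
  refine hH.isClosedMap_subtype_val _ ?_
  simp only [coe_iInf]
  exact isClosed_biInter fun M hM => M.isClosed_of_isOpen hM.1

end Frattini

section ProP

variable {p : ℕ} {G : Type*} [Group G] [TopologicalSpace G] [IsTopologicalGroup G]

theorem IsProPGroup.exists_index_eq_pow (hp : p.Prime) (hG : IsProPGroup p G) (H : Subgroup G)
    {M : Subgroup H} (hM : IsOpen (M : Set H)) : ∃ k, M.index = p ^ k := by
  obtain ⟨_, -, _, hindex⟩ := hG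
  obtain ⟨W, hW, hWM⟩ := isOpen_induced_iff.mp hM
  have hW1 : (1 : G) ∈ W := by
    have := M.one_mem
    rwa [← SetLike.mem_coe, ← hWM] at this
  obtain ⟨V, hVW⟩ := ProfiniteGrp.exist_openNormalSubgroup_sub_open_nhds_of_one hW hW1
  obtain ⟨n, hn⟩ := hindex V V.isNormal' V.isOpen
  have hVM : V.toSubgroup.subgroupOf H ≤ M := fun h hh => by
    rw [← SetLike.mem_coe, ← hWM]
    exact hVW hh
  obtain ⟨k, -, hk⟩ := (Nat.dvd_prime_pow hp).mp <|
    (index_dvd_of_le hVM).trans (hn ▸ relIndex_dvd_index_of_normal V.toSubgroup H)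
  exact ⟨k, hk⟩

theorem IsProPGroup.frattiniOf_topologicalClosure_zpowers (hp : p.Prime) (hG : IsProPGroup p G)
    (y : G) : frattiniOf (zpowers y).topologicalClosure = (zpowers (y ^ p)).topologicalClosure := by
  have : CompactSpace G := hG.1
  have : T2Space G := hG.2.1
  have : TotallyDisconnectedSpace G := hG.2.2.1
  set H := (zpowers y).topologicalClosure
  have : CompactSpace H :=
    isCompact_iff_compactSpace.mp (zpowers y).isClosed_topologicalClosure.isCompact
  set K := (zpowers (y ^ p)).topologicalClosure
  let y' : H := ⟨y, le_topologicalClosure _ (mem_zpowers y)⟩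
  have hgen : ∀ U : Subgroup H, IsOpen (U : Set H) → U ⊔ zpowers y' = ⊤ := fun U hU =>
    eq_top_of_isOpen_of_le_map (isOpen_mono le_sup_left hU)
      (zpowers_le.mpr ⟨y', mem_sup_right (mem_zpowers y'), rfl⟩)
  apply le_antisymm
  · intro g hg
    lift g to H using frattiniOf_le H hg
    by_contra hgK
    have hKc : IsClosed (K.subgroupOf H : Set H) := by
      rw [coe_subgroupOf, coe_subtype]
      exact (zpowers (y ^ p)).isClosed_topologicalClosure.preimage continuous_subtype_val
    obtain ⟨U, hUo, hKU, hgU⟩ := exists_isOpen_le_of_notMem hKc (mem_subgroupOf.not.mpr hgK)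
    have hy'U : y' ∉ U := fun hy' => hgU <| by
      rw [← sup_eq_left.mpr (zpowers_le.mpr hy'), hgen U hUo]
      exact mem_top g
    have hy'p : y' ^ p ∈ U := hKU (mem_subgroupOf.mpr (le_topologicalClosure _ (mem_zpowers _)))
    exact hgU (coe_mem_frattiniOf_iff.mp hg U hUo
      (isCoatom_of_sup_zpowers_eq_top hp (hgen U hUo) hy'p hy'U))
  · refine topologicalClosure_minimal _ (zpowers_le.mpr ?_)
      (isClosed_frattiniOf (zpowers y).isClosed_topologicalClosure)
    show ((y' ^ p : H) : G) ∈ _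
    refine coe_mem_frattiniOf_iff.mpr fun M hMo hM => ?_
    obtain ⟨k, hk⟩ := hG.exists_index_eq_pow hp H hMo
    exact pow_mem_of_isCoatom hM (hk ▸ M.pow_index_mem y')

theorem topFG_topologicalClosure_zpowers (y : G) : TopFG (zpowers y).topologicalClosure :=
  ⟨{y}, by rw [Finset.coe_singleton, ← zpowers_eq_closure]⟩

theorem FrattiniInjective.pow_injective (hp : p.Prime) (hG : IsProPGroup p G)
    (hFI : FrattiniInjective G) : Function.Injective (fun x : G => x ^ p) := by
  have : T2Space G := hG.2.1
  have hmem : ∀ u v : G, u ^ p = v ^ p → u ∈ (zpowers v).topologicalClosure := fun u v huv => by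
    have hcl := hFI _ _ (zpowers u).isClosed_topologicalClosure
      (zpowers v).isClosed_topologicalClosure (topFG_topologicalClosure_zpowers u)
      (topFG_topologicalClosure_zpowers v) (by
        simp only [hG.frattiniOf_topologicalClosure_zpowers hp, huv])
    exact hcl ▸ le_topologicalClosure _ (mem_zpowers u)
  intro u v huv
  have hcomm : Commute u v :=
    setLike_mul_comm (hmem u v huv) (le_topologicalClosure _ (mem_zpowers v))
  have hone : (u * v⁻¹) ^ p = 1 ^ p := by
    rw [hcomm.inv_right.mul_pow, inv_pow, one_pow]
    exact mul_inv_eq_one.mpr huv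
  have h1 := hmem _ _ hone
  rw [zpowers_one_eq_bot, ← SetLike.mem_coe, coe_topologicalClosure_bot, closure_singleton] at h1
  exact mul_inv_eq_one.mp h1

end ProP

theorem stmt_2_general {p : ℕ} (hp : p.Prime) (G : Type*) [Group G] [TopologicalSpace G]
    [IsTopologicalGroup G] (hG : IsProPGroup p G) (hFI : FrattiniInjective G)
    (A : Subgroup G)
    (hAab : ∀ a ∈ A, ∀ b ∈ A, a * b = b * a)
    (hAmax : ∀ B : Subgroup G, (∀ a ∈ B, ∀ b ∈ B, a * b = b * a) → A ≤ B → B = A)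
    (x : G) (hx : x ^ p ∈ A) : x ∈ A := by
  have hxA : ∀ a ∈ A, a * x = x * a := fun a ha => by
    have hconj : (a * x * a⁻¹) ^ p = x ^ p := by
      rw [conj_pow, hAab a ha _ hx, mul_inv_cancel_right]
    calc a * x = a * x * a⁻¹ * a := (inv_mul_cancel_right _ _).symm
      _ = x * a := by rw [hFI.pow_injective hp hG hconj]
  have : IsMulCommutative (Subgroup.closure (insert x (A : Set G))) := by
    refine isMulCommutative_closure ?_
    rintro a (rfl | ha) b (rfl | hb)
    · rfl
    · exact (hxA b hb).symm
    · exact hxA a ha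
    · exact hAab a ha b hb
  have hB := hAmax _ (fun a ha b hb => setLike_mul_comm ha hb)
    (fun a ha => subset_closure (Set.mem_insert_of_mem x ha))
  exact hB ▸ subset_closure (Set.mem_insert x _)

/-- Every maximal abelian closed subgroup of a Frattini-injective pro-`p`
group is isolated. -/
theorem stmt_2 {p : ℕ} (hp : p.Prime) (G : Type*) [Group G] [TopologicalSpace G]
    [IsTopologicalGroup G] (hG : IsProPGroup p G) (hFI : FrattiniInjective G)
    (A : Subgroup G) (hAc : IsClosed (A : Set G))
    (hAab : ∀ a ∈ A, ∀ b ∈ A, a * b = b * a)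
    (hAmax : ∀ B : Subgroup G, (∀ a ∈ B, ∀ b ∈ B, a * b = b * a) → A ≤ B → B = A)
    (x : G) (hx : x ^ p ∈ A) : x ∈ A :=
  stmt_2_general hp G hG hFI A hAab hAmax x hx
end

section
/- Let G be a pro-p group such that (G, U, Φ(U)) is a hierarchical triple for every open subgroup U of G. Then G is strongly Frattini-resistant: (G, H, Φ(H)) is hierarchical for every closed subgroup H of G. -/
/-!
A closed subgroup `H` of a profinite group is the intersection of the open subgroups containing
it, so an element `x` with `x ^ p ∈ Φ(H)` but `x ∉ H` would also avoid some open `U ≥ H`.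
Then `x ^ p ∈ Φ(H) ≤ Φ(U)` contradicts the hypothesis on `U`. The monotonicity `Φ(H) ≤ Φ(U)`
holds because `U` is again pro-`p`: its maximal open subgroups `M` are normal, since they contain
an open normal subgroup with a finite `p`-group (hence nilpotent) quotient, and for normal `M`
either `H ≤ M` or `H ∩ M` is a maximal subgroup of `H`.
-/

open Subgroup QuotientGroup

namespace Subgroup

variable {G : Type*} [Group G]

theorem normal_of_isCoatom_of_le {N M : Subgroup G} [N.Normal] [Group.IsNilpotent (G ⧸ N)]
    (hNM : N ≤ M) (hM : IsCoatom M) : M.Normal := by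
  have hπ : Function.Surjective (mk' N) := mk'_surjective N
  have hM_eq : (M.map (mk' N)).comap (mk' N) = M := comap_map_eq_self (by simpa using hNM)
  have hK : M.map (mk' N) < ⊤ := lt_top_iff_ne_top.2 fun h => hM.1 (by rw [← hM_eq, h, comap_top])
  have hlt := (comap_lt_comap_of_surjective hπ).2 (Group.normalizerCondition_of_isNilpotent _ hK)
  rw [comap_normalizer_eq_of_surjective _ hπ, hM_eq] at hlt
  exact normalizer_eq_top_iff.1 (hM.2 _ hlt)

theorem isCoatom_comap_of_not_le {H : Type*} [Group H] {M : Subgroup G} [M.Normal]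
    (hM : IsCoatom M) {f : H →* G} (hf : ¬ f.range ≤ M) : IsCoatom (M.comap f) := by
  refine ⟨fun htop => hf ?_, fun K hK => ?_⟩
  · rintro _ ⟨x, rfl⟩
    exact (htop ▸ mem_top x : x ∈ M.comap f)
  obtain ⟨k, hkK, hkM⟩ := SetLike.exists_of_lt hK
  have hsup : M ⊔ K.map f = ⊤ := by
    refine hM.2 _ (lt_of_le_of_ne le_sup_left fun h => hkM ?_)
    exact (h ▸ mem_sup_right (mem_map_of_mem f hkK) : f k ∈ M)
  refine eq_top_iff.2 fun h _ => ?_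
  -- `M` is normal, so `f h = m * f k'` with `m ∈ M` and `k' ∈ K`.
  obtain ⟨m, hm, _, ⟨k', hk', rfl⟩, hmk⟩ := mem_sup_of_normal_left.1 (hsup ▸ mem_top (f h))
  have hhk' : h * k'⁻¹ ∈ K :=
    hK.le (show f (h * k'⁻¹) ∈ M by rwa [map_mul, map_inv, ← hmk, mul_inv_cancel_right])
  simpa using K.mul_mem hhk' hk'

end Subgroup

section Profinite

variable {G : Type*} [Group G] [TopologicalSpace G] [IsTopologicalGroup G]

theorem exists_isOpen_le_notMem [CompactSpace G] [TotallyDisconnectedSpace G] {H : Subgroup G}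
    (hH : IsClosed (H : Set G)) {x : G} (hx : x ∉ H) :
    ∃ U : Subgroup G, IsOpen (U : Set G) ∧ H ≤ U ∧ x ∉ U := by
  have hH_eq : H = sInf {U : Subgroup G | IsOpen (U : Set G) ∧ H ≤ U} :=
    ProfiniteGrp.closedSubgroup_eq_sInf_open ⟨H, hH⟩
  by_contra! hall
  exact hx (by rw [hH_eq]; exact mem_sInf.2 fun U hU => hall U hU.1 hU.2)

variable {p : ℕ}

theorem IsProPGroup.isPGroup_quotient (hG : IsProPGroup p G) (W : OpenNormalSubgroup G) :
    IsPGroup p (G ⧸ W.toSubgroup) :=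
  have ⟨_, hn⟩ := hG.2.2.2 W.toSubgroup inferInstance W.isOpen
  IsPGroup.of_card hn

theorem IsProPGroup.normal_of_isCoatom (hp : p.Prime) (hG : IsProPGroup p G) {U : Subgroup G}
    (hU : IsOpen (U : Set G)) {M : Subgroup U} (hMo : IsOpen (M : Set U)) (hM : IsCoatom M) :
    M.Normal := by
  have := hG.1
  have := hG.2.2.1
  have : Fact p.Prime := ⟨hp⟩
  obtain ⟨W, hWM⟩ := ProfiniteGrp.exist_openNormalSubgroup_sub_open_nhds_of_one
    (hU.isOpenMap_subtype_val _ hMo) ⟨1, M.one_mem, rfl⟩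
  let φ : U →* G ⧸ W.toSubgroup := (mk' W.toSubgroup).comp U.subtype
  have hker : φ.ker ≤ M := fun z hz => by
    obtain ⟨z', hz', hzz'⟩ := hWM ((eq_one_iff _).1 hz)
    rwa [← Subtype.ext hzz']
  have : Finite (U ⧸ φ.ker) := Finite.of_injective _ (kerLift_injective φ)
  have := ((hG.isPGroup_quotient W).of_injective _ (kerLift_injective φ)).isNilpotent
  exact normal_of_isCoatom_of_le hker hM

theorem IsProPGroup.frattiniOf_mono (hp : p.Prime) (hG : IsProPGroup p G) {H U : Subgroup G}
    (hU : IsOpen (U : Set G)) (hHU : H ≤ U) : frattiniOf H ≤ frattiniOf U := by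
  rintro _ ⟨y, hy, rfl⟩
  refine ⟨inclusion hHU y, ?_, rfl⟩
  simp only [SetLike.mem_coe, Subgroup.mem_iInf] at hy ⊢
  rintro M ⟨hMo, hM⟩
  have := hG.normal_of_isCoatom hp hU hMo hM
  by_cases hle : (inclusion hHU).range ≤ M
  · exact hle ⟨y, rfl⟩
  · exact hy (M.comap (inclusion hHU))
      ⟨hMo.preimage (continuous_inclusion hHU), isCoatom_comap_of_not_le hM hle⟩

end Profinite

/-- If `(G, U, Φ(U))` is hierarchical for every open subgroup `U`, then
`G` is strongly Frattini-resistant: `(G, H, Φ(H))` is hierarchical for every closed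
subgroup `H`. -/
theorem stmt_10 {p : ℕ} (hp : p.Prime) (G : Type*) [Group G] [TopologicalSpace G]
    [IsTopologicalGroup G] (hG : IsProPGroup p G)
    (hopen : ∀ U : Subgroup G, IsOpen (U : Set G) → Hierarchical p U (frattiniOf U)) :
    ∀ H : Subgroup G, IsClosed (H : Set G) → Hierarchical p H (frattiniOf H) := by
  have := hG.1
  have := hG.2.2.1
  intro H hH x hx
  by_contra hxH
  obtain ⟨U, hUo, hHU, hxU⟩ := exists_isOpen_le_notMem hH hxH
  exact hxU (hopen U hUo x (hG.frattiniOf_mono hp hUo hHU hx))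
end

section
/- Every commutator-resistant pro-p group is Frattini-resistant: if (H, Φ(H), [H,H]) is a hierarchical triple for every finitely generated closed subgroup H of G, then (G, H, Φ(H)) is hierarchical for every finitely generated closed subgroup H of G. -/
/-!
Let `x ^ p ∈ Φ(H)` and let `K` be the closed subgroup generated by `H` and `x`. Since
`Φ(H) ≤ H ^ p [H, H]` and the `p`-th power map is a homomorphism modulo `[K, K]`, there is
`h ∈ H` with `(h⁻¹ x) ^ p ∈ [K, K]`, so commutator resistance of `K` gives `h⁻¹ x ∈ Φ(K)`.
Thus `H` and `Φ(K)` generate `K`; a proper closed subgroup of `K` lies in a maximal open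
subgroup, which contains `Φ(K)`, so `H = K` and `x ∈ H`.
-/

open scoped commutatorElement Pointwise

namespace Subgroup

variable {Q : Type*} [Group Q]

theorem exists_maximal_of_finiteIndex {V : Subgroup Q} [V.FiniteIndex] {R : Subgroup Q → Prop}
    (hV : R V) : ∃ M, Maximal (fun M => V ≤ M ∧ R M) M := by
  obtain ⟨M, hM, hmin⟩ := (measure index).wf.has_min {M | V ≤ M ∧ R M} ⟨V, le_rfl, hV⟩
  have : M.FiniteIndex := finiteIndex_of_le hM.1
  exact ⟨M, hM, fun M' hM' hle =>
    by_contra fun h => hmin M' hM' (index_strictAnti (hle.lt_of_not_ge h))⟩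

theorem mem_zpowers_of_pow_prime_eq_one {p : ℕ} [Fact p.Prime] {a b : Q} (ha : a ^ p = 1)
    (hb : b ≠ 1) (hba : b ∈ zpowers a) : a ∈ zpowers b := by
  have ha1 : a ≠ 1 := by rintro rfl; exact hb (by simpa using hba)
  have hcard : Nat.card (zpowers a) = p := by rw [Nat.card_zpowers, orderOf_eq_prime ha ha1]
  obtain ⟨k, hk⟩ := mem_zpowers_iff.mp <|
    mem_zpowers_of_prime_card hcard (g := ⟨b, hba⟩) (g' := ⟨a, mem_zpowers a⟩) (by simpa using hb)
  exact ⟨k, congrArg Subtype.val hk⟩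

theorem mem_zpowers_sup_iff {M : Subgroup Q} [M.Normal] {g w : Q} :
    w ∈ zpowers g ⊔ M ↔ (w : Q ⧸ M) ∈ zpowers (g : Q ⧸ M) := by
  have h := comap_map_eq (QuotientGroup.mk' M) (zpowers g)
  rw [QuotientGroup.ker_mk', MonoidHom.map_zpowers] at h
  rw [← h]
  rfl

/-- In `Q ⧸ M`, of exponent `p`, every nontrivial cyclic subgroup has order `p` and so is
generated by each of its nontrivial elements. -/
theorem isCoatom_of_forall_lt {p : ℕ} [Fact p.Prime] {M : Subgroup Q} [M.Normal]
    (hpow : ∀ z, z ^ p ∈ M) {g : Q} (hg : g ∉ M) (hmax : ∀ M', M < M' → g ∈ M') :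
    IsCoatom M := by
  have key : ∀ w ∉ M, w ∈ zpowers g ⊔ M := by
    intro w hw
    have hgw : g ∈ zpowers w ⊔ M := hmax _ (right_lt_sup.mpr (by rwa [zpowers_le]))
    rw [mem_zpowers_sup_iff] at hgw ⊢
    refine mem_zpowers_of_pow_prime_eq_one (p := p) ?_ (by rwa [Ne, QuotientGroup.eq_one_iff]) hgw
    rw [← QuotientGroup.mk_pow, QuotientGroup.eq_one_iff]
    exact hpow w
  refine ⟨fun h => hg (h ▸ mem_top g), fun M' hlt => eq_top_iff.mpr fun w _ => ?_⟩
  by_cases hw : w ∈ M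
  · exact hlt.le hw
  · exact sup_le (zpowers_le.mpr (hmax M' hlt)) hlt.le (key w hw)

theorem inv_pow_mul_pow_mem_commutator (H : Subgroup Q) {a b : Q} (ha : a ∈ H) (hb : b ∈ H)
    (n : ℕ) : ((a * b) ^ n)⁻¹ * (a ^ n * b ^ n) ∈ ⁅H, H⁆ := by
  have h : ((⟨a, ha⟩ * ⟨b, hb⟩ : H) ^ n)⁻¹ * ((⟨a, ha⟩ : H) ^ n * (⟨b, hb⟩ : H) ^ n) ∈
      _root_.commutator H := by
    rw [← QuotientGroup.eq_one_iff (N := _root_.commutator H)]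
    show Abelianization.of _ = 1
    simp only [map_mul, map_inv, map_pow, mul_pow]
    group
  simpa [← map_subtype_commutator] using mem_map_of_mem H.subtype h

end Subgroup

open Subgroup

section Profinite

variable {P : Type*} [Group P] [TopologicalSpace P]

/-- `frattiniOf H` is the image of `openFrattini H` in `G`. -/
def openFrattini (P : Type*) [Group P] [TopologicalSpace P] : Subgroup P :=
  ⨅ M ∈ {M : Subgroup P | IsOpen (M : Set P) ∧ IsCoatom M}, M

theorem openFrattini_le {M : Subgroup P} (hM : IsOpen (M : Set P)) (hMc : IsCoatom M) :
    openFrattini P ≤ M :=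
  iInf₂_le M ⟨hM, hMc⟩

variable [IsTopologicalGroup P] [CompactSpace P]

theorem finiteIndex_of_isOpen {V : Subgroup P} (hV : IsOpen (V : Set P)) : V.FiniteIndex :=
  have := V.quotient_finite_of_isOpen hV
  finiteIndex_of_finite_quotient

variable [TotallyDisconnectedSpace P]

theorem exists_isOpen_le_notMem_s12 {H : Subgroup P} (hH : IsClosed (H : Set P)) {g : P}
    (hg : g ∉ H) : ∃ V : Subgroup P, IsOpen (V : Set P) ∧ H ≤ V ∧ g ∉ V := by
  have h : H = sInf {V : Subgroup P | IsOpen (V : Set P) ∧ H ≤ V} :=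
    ProfiniteGrp.closedSubgroup_eq_sInf_open ⟨H, hH⟩
  rw [h, mem_sInf] at hg
  simpa [and_assoc] using hg

theorem exists_isOpen_isCoatom_le {H : Subgroup P} (hH : IsClosed (H : Set P)) (hne : H ≠ ⊤) :
    ∃ M : Subgroup P, IsOpen (M : Set P) ∧ IsCoatom M ∧ H ≤ M := by
  obtain ⟨-, g, -, hg⟩ := SetLike.lt_iff_le_and_exists.mp hne.lt_top
  obtain ⟨V, hV, hHV, hgV⟩ := exists_isOpen_le_notMem_s12 hH hg
  have := finiteIndex_of_isOpen hV
  obtain ⟨M, ⟨hVM, hMtop⟩, hmax⟩ :=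
    exists_maximal_of_finiteIndex (R := (· ≠ ⊤)) fun h => hgV ((eq_top_iff' V).mp h g)
  refine ⟨M, isOpen_mono hVM hV, ⟨hMtop, fun M' hlt => ?_⟩, hHV.trans hVM⟩
  by_contra h
  exact hlt.not_ge (hmax ⟨hVM.trans hlt.le, h⟩ hlt.le)

theorem openFrattini_le_of_forall_pow_mem {p : ℕ} [Fact p.Prime] {N : Subgroup P}
    (hN : IsClosed (N : Set P)) (hpow : ∀ a : P, a ^ p ∈ N) (hcomm : commutator P ≤ N) :
    openFrattini P ≤ N := by
  intro g hg
  by_contra hgN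
  obtain ⟨V, hV, hNV, hgV⟩ := exists_isOpen_le_notMem_s12 hN hgN
  have := finiteIndex_of_isOpen hV
  obtain ⟨M, ⟨hVM, hgM⟩, hmax⟩ := exists_maximal_of_finiteIndex (R := (g ∉ ·)) hgV
  have hNM := hNV.trans hVM
  have := Normal.of_commutator_le P (hcomm.trans hNM)
  have hM : IsCoatom M := isCoatom_of_forall_lt (p := p) (fun z => hNM (hpow z)) hgM
    fun M' hlt => by_contra fun h => hlt.not_ge (hmax ⟨hVM.trans hlt.le, h⟩ hlt.le)
  exact hgM (openFrattini_le (isOpen_mono hVM hV) hM hg)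

end Profinite

section Ambient

variable {G : Type*} [Group G] [TopologicalSpace G] [IsTopologicalGroup G]

theorem TopFG.topologicalClosure_sup_zpowers {H : Subgroup G} (hH : TopFG H) (x : G) :
    TopFG (H ⊔ zpowers x).topologicalClosure := by
  classical
  obtain ⟨S, rfl⟩ := hH
  refine ⟨insert x S, ?_⟩
  rw [Finset.coe_insert, Set.insert_eq, Subgroup.closure_union, ← zpowers_eq_closure, sup_comm]
  exact le_antisymm (topologicalClosure_mono (sup_le_sup_right (le_topologicalClosure _) _))
    (topologicalClosure_minimal _ (sup_le (topologicalClosure_mono le_sup_left)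
      (le_sup_right.trans (le_topologicalClosure _))) (isClosed_topologicalClosure _))

theorem conj_mem_commClosure {K : Subgroup G} {k c : G} (hk : k ∈ K) (hc : c ∈ commClosure K) :
    k * c * k⁻¹ ∈ commClosure K := by
  refine map_mem_closure (f := fun y => k * y * k⁻¹) (by fun_prop) hc fun y hy => ?_
  rw [SetLike.mem_coe, ← map_subtype_commutator] at hy ⊢
  obtain ⟨y, hy, rfl⟩ := hy
  exact ⟨⟨k, hk⟩ * y * ⟨k, hk⟩⁻¹, Normal.conj_mem inferInstance y hy _, rfl⟩

/-- Modulo the closed commutator subgroup of `K ≥ H`, the `n`-th power map is a homomorphism on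
`H`, so the products `h ^ n * c` form a subgroup. -/
theorem exists_subgroup_coe_eq_pow_image_mul {H K : Subgroup G} (hHK : H ≤ K) (n : ℕ) :
    ∃ S : Subgroup G, (S : Set G) = (· ^ n) '' (H : Set G) * commClosure K := by
  have hKC : ⁅K, K⁆ ≤ commClosure K := le_topologicalClosure _
  refine ⟨{ carrier := (· ^ n) '' (H : Set G) * commClosure K,
             one_mem' := ⟨1, ⟨1, one_mem H, one_pow n⟩, 1, one_mem _, mul_one 1⟩,
             mul_mem' := ?_,
             inv_mem' := ?_ }, rfl⟩
  · rintro - - ⟨-, ⟨a, ha, rfl⟩, c, hc, rfl⟩ ⟨-, ⟨b, hb, rfl⟩, d, hd, rfl⟩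
    have hab := hKC (inv_pow_mul_pow_mem_commutator K (hHK ha) (hHK hb) n)
    have hc' := conj_mem_commClosure (inv_mem (pow_mem (hHK hb) n)) hc
    exact ⟨(a * b) ^ n, ⟨a * b, mul_mem ha hb, rfl⟩, _, mul_mem (mul_mem hab hc') hd, by group⟩
  · rintro - ⟨-, ⟨a, ha, rfl⟩, c, hc, rfl⟩
    exact ⟨a⁻¹ ^ n, ⟨a⁻¹, inv_mem ha, rfl⟩, _,
      conj_mem_commClosure (pow_mem (hHK ha) n) (inv_mem hc), by group⟩

theorem inv_mul_pow_mem_commClosure {K : Subgroup G} {a b : G} (ha : a ∈ K) (hb : b ∈ K) {n : ℕ}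
    (h : (a ^ n)⁻¹ * b ^ n ∈ commClosure K) : (a⁻¹ * b) ^ n ∈ commClosure K := by
  have hq := le_topologicalClosure _ (inv_pow_mul_pow_mem_commutator K (inv_mem ha) hb n)
  rw [inv_pow] at hq
  convert mul_mem h (inv_mem hq) using 1
  group

variable [CompactSpace G] [TotallyDisconnectedSpace G]

/-- `Φ(H) ≤ H ^ p [H, H]`, with `[H, H]` enlarged to the closed commutator subgroup of `K`. -/
theorem exists_inv_pow_mul_mem_commClosure {p : ℕ} [Fact p.Prime] {H K : Subgroup G}
    (hH : IsClosed (H : Set G)) (hHK : H ≤ K) {y : G} (hy : y ∈ frattiniOf H) :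
    ∃ h ∈ H, (h ^ p)⁻¹ * y ∈ commClosure K := by
  obtain ⟨S, hS⟩ := exists_subgroup_coe_eq_pow_image_mul hHK p
  have hSc : IsClosed (S : Set G) := hS ▸ (isClosed_topologicalClosure _).mul_left_of_isCompact
    (hH.isCompact.image (continuous_pow p))
  have : CompactSpace H := isCompact_iff_compactSpace.mp hH.isCompact
  have hle : openFrattini H ≤ S.comap H.subtype := by
    refine openFrattini_le_of_forall_pow_mem (p := p) (hSc.preimage continuous_subtype_val)
      (fun a => ?_) ?_
    · show (a : G) ^ p ∈ (S : Set G)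
      rw [hS]
      exact ⟨(a : G) ^ p, ⟨a, a.2, rfl⟩, 1, one_mem _, mul_one _⟩
    · rw [← map_le_iff_le_comap, map_subtype_commutator]
      intro c hc
      rw [← SetLike.mem_coe, hS]
      exact ⟨1, ⟨1, one_mem H, one_pow p⟩, c,
        le_topologicalClosure _ (commutator_mono hHK hHK hc), one_mul c⟩
  have hyS : y ∈ (S : Set G) := map_le_iff_le_comap.mpr hle hy
  rw [hS] at hyS
  obtain ⟨-, ⟨h, hh, rfl⟩, c, hc, rfl⟩ := hyS
  exact ⟨h, hh, by simpa using hc⟩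

theorem le_of_le_topologicalClosure_sup_frattiniOf {H K : Subgroup G} (hH : IsClosed (H : Set G))
    (hK : IsClosed (K : Set G)) (hHK : H ≤ K)
    (hKH : K ≤ (H ⊔ frattiniOf K).topologicalClosure) : K ≤ H := by
  have : CompactSpace K := isCompact_iff_compactSpace.mp hK.isCompact
  by_contra hne
  obtain ⟨M, hMo, hMc, hHM⟩ := exists_isOpen_isCoatom_le (H := H.comap K.subtype)
    (hH.preimage continuous_subtype_val) fun h => hne fun k hk => (eq_top_iff' _).mp h ⟨k, hk⟩
  have hMc' : IsClosed (M.map K.subtype : Set G) := by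
    rw [coe_map]
    exact hK.isClosedEmbedding_subtypeVal.isClosedMap _ (M.isClosed_of_isOpen hMo)
  have hKM : K ≤ M.map K.subtype := hKH.trans <| topologicalClosure_minimal _
    (sup_le (fun a ha => ⟨⟨a, hHK ha⟩, hHM ha, rfl⟩) (map_mono (openFrattini_le hMo hMc))) hMc'
  refine hMc.1 (eq_top_iff.mpr fun k _ => ?_)
  obtain ⟨m, hm, hmk⟩ := hKM k.2
  rwa [Subtype.ext hmk] at hm

end Ambient

/-- Every commutator-resistant pro-`p` group is Frattini-resistant: if
`(H, Φ(H), [H,H])` is hierarchical for every finitely generated closed subgroup `H`,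
then `(G, H, Φ(H))` is hierarchical for every finitely generated closed subgroup `H`. -/
theorem stmt_12 {p : ℕ} (hp : p.Prime) (G : Type*) [Group G] [TopologicalSpace G]
    [IsTopologicalGroup G] (hG : IsProPGroup p G)
    (hCR : ∀ H : Subgroup G, IsClosed (H : Set G) → TopFG H →
      ∀ x ∈ H, x ^ p ∈ commClosure H → x ∈ frattiniOf H) :
    FrattiniResistant p G := by
  obtain ⟨_, -, _, -⟩ := hG
  have := Fact.mk hp
  intro H hH hHfg x hx
  set K := (H ⊔ zpowers x).topologicalClosure
  have hHK : H ≤ K := le_sup_left.trans (le_topologicalClosure _)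
  have hxK : x ∈ K := le_sup_right.trans (le_topologicalClosure _) (mem_zpowers x)
  have hK : IsClosed (K : Set G) := isClosed_topologicalClosure _
  obtain ⟨h, hh, hc⟩ := exists_inv_pow_mul_mem_commClosure (p := p) hH hHK hx
  have hΦ : h⁻¹ * x ∈ frattiniOf K := hCR K hK (hHfg.topologicalClosure_sup_zpowers x) _
    (mul_mem (inv_mem (hHK hh)) hxK) (inv_mul_pow_mem_commClosure (hHK hh) hxK hc)
  have hxHΦ : x ∈ H ⊔ frattiniOf K := by
    simpa using mul_mem (mem_sup_left hh) (mem_sup_right hΦ)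
  exact le_of_le_topologicalClosure_sup_frattiniOf hH hK hHK
    (topologicalClosure_mono (sup_le le_sup_left (zpowers_le.mpr hxHΦ))) hxK
end

section
/- Let G be a finitely generated pro-p group. Then (G, Φ(G), [G,G]) is a hierarchical triple if and only if the abelianization G^{ab} has no direct cyclic factor of order p. In particular, if G^{ab} is torsion-free, then (G, Φ(G), [G,G]) is hierarchical. -/
instance commClosure_top_normal {G : Type*} [Group G] [TopologicalSpace G]
    [IsTopologicalGroup G] : (commClosure (⊤ : Subgroup G)).Normal :=
  Subgroup.is_normal_topologicalClosure _

/-- The old Mathlib `Monoid.IsTorsionFree` (removed since): no nontrivial element has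
finite order. -/
def Monoid.IsTorsionFree (G : Type*) [Monoid G] : Prop :=
  ∀ g : G, g ≠ 1 → ¬IsOfFinOrder g

/-!
Write `A` for the quotient of `G` by its closed commutator subgroup. An open maximal subgroup `M`
of a pro-`p` group contains a normal open subgroup with finite `p`-group quotient, so `M` is
normal and `G ⧸ M` is simple and nilpotent, hence abelian. If `x ^ p` lies in the closed
commutator subgroup but some such `M` misses `x`, the image of `M` is a maximal subgroup of `A`
missing the element `x̄` of order `p`, and `⟨x̄⟩` is a direct factor of order `p`.

Conversely, `Φ(G)` lies in every closed subgroup `W` containing all `p`-th powers and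
commutators: separate `x ∉ W` by an open subgroup `M ⊇ W`; the finite elementary abelian group
`G ⧸ M` has a maximal subgroup avoiding `x̄`. Taking for `W` the preimage of `A ^ p` (closed by
compactness), hierarchy forces every element of order `p` of `A` into `A ^ p`, which a direct
factor of order `p` meets trivially.
-/

open Subgroup
open scoped commutatorElement

section GroupTheory

variable {G H : Type*} [Group G] [Group H]

theorem Subgroup.isCoatom_map_of_ker_le {f : G →* H} (hf : Function.Surjective f)
    {M : Subgroup G} (hker : f.ker ≤ M) (hM : IsCoatom M) : IsCoatom (M.map f) := by
  have hcomap : (M.map f).comap f = M := comap_map_eq_self hker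
  refine ⟨fun htop => hM.1 (by rw [← hcomap, htop, comap_top]), fun K hK => ?_⟩
  have := hM.2 (K.comap f) (hcomap ▸ (comap_lt_comap_of_surjective hf).mpr hK)
  exact comap_injective hf (this.trans (comap_top _).symm)

theorem Subgroup.normal_of_commutator_le {M : Subgroup G} (h : _root_.commutator G ≤ M) :
    M.Normal where
  conj_mem m hm g := by
    have hcomm : ⁅g, m⁆ ∈ M := h (commutator_mem_commutator (mem_top g) (mem_top m))
    simpa [commutatorElement_def] using M.mul_mem hcomm hm

theorem Subgroup.normal_of_isCoatom_of_le_s14 {U M : Subgroup G} [U.Normal]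
    [Group.IsNilpotent (G ⧸ U)] (hUM : U ≤ M) (hM : IsCoatom M) : M.Normal := by
  have hker : (QuotientGroup.mk' U).ker ≤ M := by rwa [QuotientGroup.ker_mk']
  have hMb : (M.map (QuotientGroup.mk' U)).Normal :=
    NormalizerCondition.normal_of_coatom _ Group.normalizerCondition_of_isNilpotent
      (isCoatom_map_of_ker_le (QuotientGroup.mk'_surjective U) hker hM)
  rw [← comap_map_eq_self hker]
  exact hMb.comap _

theorem QuotientGroup.isSimpleGroup_of_isCoatom {M : Subgroup G} [M.Normal] (hM : IsCoatom M) :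
    IsSimpleGroup (G ⧸ M) where
  exists_pair_ne := by
    obtain ⟨g, hg⟩ := (SetLike.exists_of_lt hM.lt_top).imp fun _ h => h.2
    exact ⟨g, 1, by rwa [Ne, QuotientGroup.eq_one_iff]⟩
  eq_bot_or_eq_top_of_normal K _ := by
    have hMK : M ≤ K.comap (mk' M) := fun m hm => by simp [(QuotientGroup.eq_one_iff m).mpr hm]
    rcases hM.le_iff.mp hMK with h | h
    · exact .inr (comap_injective (mk'_surjective M) (h.trans (comap_top _).symm))
    · refine .inl (comap_injective (mk'_surjective M) ?_)
      rw [h, MonoidHom.comap_bot, ker_mk']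

theorem Subgroup.isCompl_zpowers_of_isCoatom {p : ℕ} (hp : p.Prime) {B : Subgroup G}
    (hB : IsCoatom B) {a : G} (ha : a ∉ B) (hap : orderOf a = p) : IsCompl (zpowers a) B := by
  have hcard : Nat.card (zpowers a) = p := by rw [Nat.card_zpowers, hap]
  have : Finite (zpowers a) := Nat.finite_of_card_ne_zero (hcard ▸ hp.ne_zero)
  refine ⟨disjoint_iff.mpr ?_, codisjoint_iff.mpr ?_⟩
  · have hdvd : Nat.card ↥(zpowers a ⊓ B) ∣ p := hcard ▸ card_dvd_of_le inf_le_left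
    rcases (Nat.dvd_prime hp).mp hdvd with h | h
    · exact card_eq_one.mp h
    · have := eq_of_le_of_card_ge (inf_le_left : zpowers a ⊓ B ≤ zpowers a) (by rw [h, hcard])
      exact absurd (inf_eq_left.mp this (mem_zpowers a)) ha
  · rw [sup_comm]
    exact hB.2 _ (left_lt_sup.mpr fun h => ha (h (mem_zpowers a)))

open scoped IsMulCommutative in
theorem exists_isCoatom_notMem_of_pow_eq_one {E : Type*} [Group E] [IsMulCommutative E]
    [Finite E] {p : ℕ} (hp : p.Prime) (hexp : ∀ e : E, e ^ p = 1) {v : E} (hv : v ≠ 1) :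
    ∃ K : Subgroup E, IsCoatom K ∧ v ∉ K := by
  obtain ⟨K, hvK, hKmax⟩ := (Set.toFinite {K : Subgroup E | v ∉ K}).exists_maximal
    ⟨⊥, by simpa using hv⟩
  have hmax : ∀ L, K < L → v ∈ L := fun L hKL =>
    by_contra fun hvL => hKL.not_ge (hKmax hvL hKL.le)
  refine ⟨K, ⟨fun h => hvK (h ▸ mem_top v), fun L hKL => (eq_top_iff' L).mpr fun w => ?_⟩,
    hvK⟩
  -- otherwise `v = k * w ^ n` with `k ∈ K` and `p ∤ n`, so `w` is a power of `w ^ n ∈ L`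
  by_contra hwL
  obtain ⟨k, hk, z, hz, hkz⟩ := mem_sup.mp <|
    hmax _ (left_lt_sup.mpr fun h => hwL (hKL.le (h (mem_zpowers w))))
  obtain ⟨n, rfl⟩ : ∃ n : ℕ, w ^ n = z := mem_powers_iff_mem_zpowers.mpr hz
  have hwn : w ^ n ∈ L := by
    rw [eq_inv_mul_of_mul_eq hkz]
    exact L.mul_mem (L.inv_mem (hKL.le hk)) (hmax L hKL)
  by_cases hpn : p ∣ n
  · obtain ⟨m, rfl⟩ := hpn
    rw [pow_mul, hexp, one_pow, mul_one] at hkz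
    exact hvK (hkz ▸ hk)
  · have hcop : n.Coprime (orderOf w) := Nat.Coprime.coprime_dvd_right
      (orderOf_dvd_of_pow_eq_one (hexp w)) ((hp.coprime_iff_not_dvd.mpr hpn).symm)
    obtain ⟨m, hm⟩ := exists_pow_eq_self_of_coprime hcop
    exact hwL (hm ▸ L.pow_mem hwn m)

open scoped IsMulCommutative in
theorem not_exists_pow_eq_of_isCompl {p : ℕ} [IsMulCommutative G] {C B : Subgroup G}
    (hCB : IsCompl C B) (hC : Nat.card C = p) {c : G} (hc : c ∈ C) (hc1 : c ≠ 1) :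
    ¬ ∃ a : G, a ^ p = c := by
  rintro ⟨a, rfl⟩
  obtain ⟨c', hc', b, hb, rfl⟩ := mem_sup.mp (hCB.codisjoint.eq_top ▸ mem_top a)
  have hc'p : c' ^ p = 1 := by
    simpa [hC] using congrArg Subtype.val (pow_card_eq_one' (G := C) (x := ⟨c', hc'⟩))
  rw [mul_pow, hc'p, one_mul] at hc hc1
  exact hc1 ((mem_bot.mp (hCB.disjoint.eq_bot ▸ mem_inf.mpr ⟨hc, B.pow_mem hb p⟩)))

theorem Subgroup.exists_orderOf_eq_prime_of_card_eq {p : ℕ} (hp : p.Prime) {C : Subgroup G}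
    (hC : Nat.card C = p) : ∃ c ∈ C, orderOf c = p := by
  have : Fact p.Prime := ⟨hp⟩
  have : Finite C := Nat.finite_of_card_ne_zero (hC ▸ hp.ne_zero)
  obtain ⟨c, hc⟩ := exists_prime_orderOf_dvd_card' p hC.symm.dvd
  exact ⟨c, c.2, by rwa [orderOf_coe]⟩

theorem not_exists_isCompl_of_isTorsionFree {p : ℕ} (hp : p.Prime)
    (htf : Monoid.IsTorsionFree G) : ¬ ∃ C B : Subgroup G, IsCompl C B ∧ Nat.card C = p := by
  rintro ⟨C, -, -, hC⟩
  obtain ⟨c, -, hc⟩ := exists_orderOf_eq_prime_of_card_eq hp hC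
  exact htf c (fun h => hp.ne_one (hc ▸ orderOf_eq_one_iff.mpr h))
    (orderOf_pos_iff.mp (hc ▸ hp.pos))

end GroupTheory

section Topology

variable {G : Type*} [Group G] [TopologicalSpace G]

theorem mem_frattiniOf_top_iff {x : G} :
    x ∈ frattiniOf (⊤ : Subgroup G) ↔
      ∀ M : Subgroup G, IsOpen (M : Set G) → IsCoatom M → x ∈ M := by
  let e : (⊤ : Subgroup G) ≃* G := topEquiv
  have he : Topology.IsOpenEmbedding e := IsOpen.isOpenEmbedding_subtypeVal (by simp)
  change x ∈ (⨅ M ∈ {M : Subgroup (⊤ : Subgroup G) | _ ∧ _}, M).map e.toMonoidHom ↔ _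
  simp only [mem_map_equiv, mem_iInf, Set.mem_ofPred_eq, and_imp]
  refine ⟨fun h M hMo hM => ?_, fun h M hMo hM => ?_⟩
  · simpa using h (M.comap e.toMonoidHom) (hMo.preimage he.continuous) ((isCoatom_comap e).mpr hM)
  · exact mem_map_equiv.mp (h _ (he.isOpenMap _ hMo) ((e.mapSubgroup.isCoatom_iff M).mpr hM))

variable [IsTopologicalGroup G] {p : ℕ}

theorem frattiniOf_top_le [CompactSpace G] [TotallyDisconnectedSpace G] (hp : p.Prime)
    {W : Subgroup G} (hW : IsClosed (W : Set G)) (hpow : ∀ g : G, g ^ p ∈ W)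
    (hcomm : _root_.commutator G ≤ W) : frattiniOf (⊤ : Subgroup G) ≤ W := by
  intro x hx
  by_contra hxW
  obtain ⟨M, hMo, hWM, hxM⟩ :
      ∃ M : Subgroup G, IsOpen (M : Set G) ∧ W ≤ M ∧ x ∉ M := by
    have hW' : W = sInf {M : Subgroup G | IsOpen (M : Set G) ∧ W ≤ M} :=
      ProfiniteGrp.closedSubgroup_eq_sInf_open ⟨W, hW⟩
    rw [hW', mem_sInf] at hxW
    simpa using hxW
  have : M.Normal := normal_of_commutator_le (hcomm.trans hWM)
  have : IsMulCommutative (G ⧸ M) :=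
    Normal.quotient_commutative_iff_commutator_le.mpr (hcomm.trans hWM)
  have : Finite (G ⧸ M) := M.quotient_finite_of_isOpen hMo
  have hexp (e : G ⧸ M) : e ^ p = 1 := QuotientGroup.induction_on e fun g => by
    rw [← QuotientGroup.mk_pow, QuotientGroup.eq_one_iff]
    exact hWM (hpow g)
  obtain ⟨K, hK, hxK⟩ := exists_isCoatom_notMem_of_pow_eq_one hp hexp
    (v := (x : G ⧸ M)) (by rwa [Ne, QuotientGroup.eq_one_iff])
  have hMK : M ≤ K.comap (QuotientGroup.mk' M) := fun m hm => by
    simp [(QuotientGroup.eq_one_iff m).mpr hm]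
  exact hxK (mem_frattiniOf_top_iff.mp hx _ (isOpen_mono hMK hMo)
    (isCoatom_comap_of_surjective (QuotientGroup.mk'_surjective M) hK))

theorem IsProPGroup.isNilpotent_quotient (hG : IsProPGroup p G) (hp : p.Prime) (U : Subgroup G)
    [U.Normal] (hU : IsOpen (U : Set G)) : Group.IsNilpotent (G ⧸ U) := by
  have : CompactSpace G := hG.1
  have : Fact p.Prime := ⟨hp⟩
  have : Finite (G ⧸ U) := U.quotient_finite_of_isOpen hU
  obtain ⟨n, hn⟩ := hG.2.2.2 U inferInstance hU
  exact (IsPGroup.of_card (n := n) hn).isNilpotent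

theorem IsProPGroup.commutator_le_of_isCoatom (hG : IsProPGroup p G) (hp : p.Prime)
    {M : Subgroup G} (hMo : IsOpen (M : Set G)) (hM : IsCoatom M) : _root_.commutator G ≤ M := by
  have : CompactSpace G := hG.1
  have : TotallyDisconnectedSpace G := hG.2.2.1
  obtain ⟨U, hUM⟩ := ProfiniteGrp.exist_openNormalSubgroup_sub_open_nhds_of_one hMo M.one_mem
  have := hG.isNilpotent_quotient hp U U.isOpen'
  have : M.Normal := normal_of_isCoatom_of_le_s14 (U := U.toSubgroup) hUM hM
  have := hG.isNilpotent_quotient hp M hMo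
  have := QuotientGroup.isSimpleGroup_of_isCoatom hM
  exact Normal.quotient_commutative_iff_commutator_le.mp inferInstance

end Topology

section Abelianization

variable {G : Type*} [Group G] [TopologicalSpace G] [IsTopologicalGroup G] {p : ℕ}

theorem commutator_le_commClosure_top : _root_.commutator G ≤ commClosure (⊤ : Subgroup G) :=
  le_topologicalClosure _

open scoped IsMulCommutative in
theorem not_exists_isCompl_of_hierarchical [CompactSpace G] [TotallyDisconnectedSpace G]
    (hp : p.Prime) (hH : Hierarchical p (frattiniOf (⊤ : Subgroup G)) (commClosure ⊤)) :
    ¬ ∃ C B : Subgroup (G ⧸ commClosure (⊤ : Subgroup G)),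
      IsCompl C B ∧ Nat.card C = p := by
  rintro ⟨C, B, hCB, hC⟩
  set N := commClosure (⊤ : Subgroup G)
  have : IsMulCommutative (G ⧸ N) :=
    Normal.quotient_commutative_iff_commutator_le.mpr commutator_le_commClosure_top
  have : IsClosed (N : Set G) := isClosed_topologicalClosure _
  obtain ⟨c, hcC, hc⟩ := exists_orderOf_eq_prime_of_card_eq hp hC
  obtain ⟨x, rfl⟩ := QuotientGroup.mk_surjective c
  have hxΦ : x ∈ frattiniOf ⊤ := hH x <| by
    rw [← QuotientGroup.eq_one_iff, QuotientGroup.mk_pow, ← hc, pow_orderOf_eq_one]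
  let P : Subgroup (G ⧸ N) := (powMonoidHom p).range
  have hP : IsClosed (P : Set (G ⧸ N)) := (isCompact_range (continuous_pow p)).isClosed
  have hNP : _root_.commutator G ≤ P.comap (QuotientGroup.mk' N) := fun g hg => by
    rw [mem_comap, QuotientGroup.mk'_apply,
      (QuotientGroup.eq_one_iff g).mpr (commutator_le_commClosure_top hg)]
    exact P.one_mem
  have hpowP (g : G) : g ^ p ∈ P.comap (QuotientGroup.mk' N) := ⟨g, rfl⟩
  obtain ⟨a, ha⟩ := frattiniOf_top_le hp (hP.preimage continuous_quotient_mk') hpowP hNP hxΦ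
  exact not_exists_pow_eq_of_isCompl hCB hC hcC
    (fun h => hp.ne_one (hc ▸ orderOf_eq_one_iff.mpr h)) ⟨a, ha⟩

theorem hierarchical_of_not_exists_isCompl (hG : IsProPGroup p G) (hp : p.Prime)
    (h : ¬ ∃ C B : Subgroup (G ⧸ commClosure (⊤ : Subgroup G)),
      IsCompl C B ∧ Nat.card C = p) :
    Hierarchical p (frattiniOf (⊤ : Subgroup G)) (commClosure ⊤) := by
  have : Fact p.Prime := ⟨hp⟩
  refine fun x hx => mem_frattiniOf_top_iff.mpr fun M hMo hM => ?_
  by_contra hxM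
  set N := commClosure (⊤ : Subgroup G)
  have hker : (QuotientGroup.mk' N).ker ≤ M := by
    rw [QuotientGroup.ker_mk']
    exact topologicalClosure_minimal _ (hG.commutator_le_of_isCoatom hp hMo hM)
      (M.isClosed_of_isOpen hMo)
  have hxB : (x : G ⧸ N) ∉ M.map (QuotientGroup.mk' N) := fun hmem =>
    hxM (comap_map_eq_self hker ▸ mem_comap.mpr hmem)
  have hxp : orderOf (x : G ⧸ N) = p := orderOf_eq_prime
    (by rwa [← QuotientGroup.mk_pow, QuotientGroup.eq_one_iff]) (fun h1 => hxB (h1 ▸ one_mem _))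
  exact h ⟨_, _, isCompl_zpowers_of_isCoatom hp
    (isCoatom_map_of_ker_le (QuotientGroup.mk'_surjective N) hker hM) hxB hxp,
    by rw [Nat.card_zpowers, hxp]⟩

end Abelianization

theorem stmt_14_general {p : ℕ} (hp : p.Prime) (G : Type*) [Group G] [TopologicalSpace G]
    [IsTopologicalGroup G] (hG : IsProPGroup p G) :
    (Hierarchical p (frattiniOf (⊤ : Subgroup G)) (commClosure (⊤ : Subgroup G)) ↔
      ¬ ∃ C B : Subgroup (G ⧸ commClosure (⊤ : Subgroup G)),
          IsCompl C B ∧ Nat.card C = p) ∧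
    (Monoid.IsTorsionFree (G ⧸ commClosure (⊤ : Subgroup G)) →
      Hierarchical p (frattiniOf (⊤ : Subgroup G)) (commClosure (⊤ : Subgroup G))) := by
  have : CompactSpace G := hG.1
  have : TotallyDisconnectedSpace G := hG.2.2.1
  have hiff := Iff.intro (not_exists_isCompl_of_hierarchical hp)
    (hierarchical_of_not_exists_isCompl hG hp)
  exact ⟨hiff, fun htf => hiff.mpr (not_exists_isCompl_of_isTorsionFree hp htf)⟩

/-- For a finitely generated pro-`p` group `G`, the triple
`(G, Φ(G), [G,G])` is hierarchical iff the abelianization `G/[G,G]` has no direct cyclic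
factor of order `p`; in particular, it is hierarchical whenever the abelianization is
torsion-free. -/
theorem stmt_14 {p : ℕ} (hp : p.Prime) (G : Type*) [Group G] [TopologicalSpace G]
    [IsTopologicalGroup G] (hG : IsProPGroup p G) (hfg : TopFG (⊤ : Subgroup G)) :
    (Hierarchical p (frattiniOf (⊤ : Subgroup G)) (commClosure (⊤ : Subgroup G)) ↔
      ¬ ∃ C B : Subgroup (G ⧸ commClosure (⊤ : Subgroup G)),
          IsCompl C B ∧ Nat.card C = p) ∧
    (Monoid.IsTorsionFree (G ⧸ commClosure (⊤ : Subgroup G)) →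
      Hierarchical p (frattiniOf (⊤ : Subgroup G)) (commClosure (⊤ : Subgroup G))) :=
  stmt_14_general hp G hG
end
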